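/- arXiv:2505.08317 — 2 statements merged into one kernel-verified Lean document; each statement's English description precedes it below -/
import Mathlib

section
/- For every β > 0 and all θ₁, θ₂ > 0 with θ₁ ≤ θ₂, one has φ_β(x,θ₁) ≤ φ_β(x,θ₂) for all x > 0; i.e., the solution of the auxiliary boundary-value problem is nondecreasing in the mean-field parameter θ. -/
open Set Filter Topology MeasureTheory

noncomputable section

/-- `ℓ^ε(x,θ) = −b(x)c(x) + π(x,θ) − ½σ(x)²(ε c(x)² + c'(x))`. -/
def ell (ε : ℝ) (b σ c : ℝ → ℝ) (π : ℝ → ℝ → ℝ) (x θ : ℝ) : ℝ :=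
  -(b x) * c x + π x θ - (1 / 2) * (σ x) ^ 2 * (ε * (c x) ^ 2 + deriv c x)

/-- `ℓ̲^ε(x) = −b(x)c(x) + κ(x) − ½σ(x)²(ε c(x)² + c'(x))`. -/
def ellKappa (ε : ℝ) (b σ c κ : ℝ → ℝ) (x : ℝ) : ℝ :=
  -(b x) * c x + κ x - (1 / 2) * (σ x) ^ 2 * (ε * (c x) ^ 2 + deriv c x)

/-- `φ` is a C¹ solution of the auxiliary boundary value problem with boundary point `β`,
mean-field parameter `θ` and perturbation `γ`. -/
def IsAuxSol (ε : ℝ) (b σ c : ℝ → ℝ) (π : ℝ → ℝ → ℝ) (β θ γ : ℝ) (φ : ℝ → ℝ) : Prop :=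
  ContDiffOn ℝ 1 φ (Ioi 0) ∧
    (∀ x ∈ Ioo (0 : ℝ) β,
      (1 / 2) * (σ x) ^ 2 * deriv φ x + b x * φ x - (ε / 2) * (σ x) ^ 2 * (φ x) ^ 2
        = ell ε b σ c π β θ - π x θ + γ) ∧
    (∀ x : ℝ, β ≤ x → φ x = -(c x))

/-- `φ` is a C¹ solution of the limiting (robust) auxiliary boundary value problem. -/
def IsAuxSolKappa (ε : ℝ) (b σ c κ : ℝ → ℝ) (β : ℝ) (φ : ℝ → ℝ) : Prop :=
  ContDiffOn ℝ 1 φ (Ioi 0) ∧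
    (∀ x ∈ Ioo (0 : ℝ) β,
      (1 / 2) * (σ x) ^ 2 * deriv φ x + b x * φ x - (ε / 2) * (σ x) ^ 2 * (φ x) ^ 2
        = ellKappa ε b σ c κ β - κ x) ∧
    (∀ x : ℝ, β ≤ x → φ x = -(c x))

/-- The standing assumptions of the paper (Assumptions 2.1, 2.2, 2.4 and 3.1). -/
structure Setting where
  ε : ℝ
  b : ℝ → ℝ
  σ : ℝ → ℝ
  c : ℝ → ℝ
  π : ℝ → ℝ → ℝ
  xhat : ℝ → ℝ
  ell0 : ℝ → ℝ
  hε : 0 < ε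
  hb : ContDiffOn ℝ 1 b (Ioi 0)
  hσ : ContDiffOn ℝ 1 σ (Ioi 0)
  hσpos : ∀ x : ℝ, 0 < x → 0 < σ x
  hgrowth : ∃ C > (0 : ℝ), ∃ ζ > (0 : ℝ), ∀ x : ℝ, 0 < x → |b x| + |σ x| ≤ C * (1 + x ^ ζ)
  hc : ContDiffOn ℝ 1 c (Ioi 0)
  hcanti : AntitoneOn c (Ioi 0)
  clow : ℝ
  chigh : ℝ
  hclow : 0 < clow
  hcle : clow ≤ chigh
  hcbd : ∀ x : ℝ, 0 < x → c x ∈ Icc clow chigh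
  hπC2 : ∀ θ : ℝ, 0 < θ → ContDiffOn ℝ 2 (fun x => π x θ) (Ioi 0)
  hπpos : ∀ x θ : ℝ, 0 < x → 0 < θ → 0 < π x θ
  hπmono : ∀ θ : ℝ, 0 < θ → MonotoneOn (fun x => π x θ) (Ioi 0)
  hπconc : ∀ θ : ℝ, 0 < θ → ConcaveOn ℝ (Ioi 0) (fun x => π x θ)
  hπxθcont : ContinuousOn
    (fun p : ℝ × ℝ => deriv (fun θ' => deriv (fun x' => π x' θ') p.1) p.2) (Ioi 0 ×ˢ Ioi 0)
  hπxθneg : ∀ x θ : ℝ, 0 < x → 0 < θ →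
    deriv (fun θ' => deriv (fun x' => π x' θ') x) θ < 0
  hxhatpos : ∀ θ : ℝ, 0 < θ → 0 < xhat θ
  hellincr : ∀ θ : ℝ, 0 < θ → ∀ x : ℝ, 0 < x → x < xhat θ →
    0 < deriv (fun y => ell ε b σ c π y θ) x
  hellcrit : ∀ θ : ℝ, 0 < θ → deriv (fun y => ell ε b σ c π y θ) (xhat θ) = 0
  helldecr : ∀ θ : ℝ, 0 < θ → ∀ x : ℝ, xhat θ < x →
    deriv (fun y => ell ε b σ c π y θ) x < 0
  hellbot : ∀ θ : ℝ, 0 < θ → Tendsto (fun x => ell ε b σ c π x θ) atTop atBot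
  helllim0 : ∀ θ : ℝ, 0 < θ →
    Tendsto (fun x => ell ε b σ c π x θ) (nhdsWithin 0 (Ioi 0)) (nhds (ell0 θ))
  hxunder : ∀ θ : ℝ, 0 < θ → ∃ x : ℝ, xhat θ ≤ x ∧ ell ε b σ c π x θ = ell0 θ

namespace Setting

/-- `ℓ^ε` associated with the data of the setting. -/
def ellS (S : Setting) (x θ : ℝ) : ℝ := ell S.ε S.b S.σ S.c S.π x θ

/-- `x̲̂_ε(θ) = inf {x ≥ x̂_ε(θ) : ℓ^ε(x,θ) = ℓ^ε(0⁺,θ)}`. -/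
def xunder (S : Setting) (θ : ℝ) : ℝ :=
  sInf {x : ℝ | S.xhat θ ≤ x ∧ S.ellS x θ = S.ell0 θ}

/-- `B_ε(θ) = {β > 0 : φ_β(x,θ) ≥ −c(x) for all x ∈ (0,β]}`. -/
def Bset (S : Setting) (φ : ℝ → ℝ → ℝ → ℝ) (θ : ℝ) : Set ℝ :=
  {β : ℝ | 0 < β ∧ ∀ x : ℝ, 0 < x → x ≤ β → -(S.c x) ≤ φ β θ x}

/-- `β_ε(θ) = inf B_ε(θ)`. -/
def betaE (S : Setting) (φ : ℝ → ℝ → ℝ → ℝ) (θ : ℝ) : ℝ := sInf (S.Bset φ θ)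

/-- `V_x^ε(x,θ)`: equal to `φ_{β_ε(θ)}(x,θ)` below the free boundary, `−c(x)` above it. -/
def Vx (S : Setting) (φ : ℝ → ℝ → ℝ → ℝ) (x θ : ℝ) : ℝ :=
  if x < S.betaE φ θ then φ (S.betaE φ θ) θ x else -(S.c x)

/-- The candidate potential `V^ε(x,θ)`, normalized by `V^ε(β_ε(θ),θ) = 0`. -/
def V (S : Setting) (φ : ℝ → ℝ → ℝ → ℝ) (x θ : ℝ) : ℝ :=
  if x < S.betaE φ θ then -(∫ y in x..S.betaE φ θ, φ (S.betaE φ θ) θ y)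
  else -(∫ y in S.betaE φ θ..x, S.c y)

/-- The scale density `S'(y) = exp(−∫_{x₀}^y 2b/σ² )` of the uncontrolled diffusion. -/
def scaleD (S : Setting) (x₀ y : ℝ) : ℝ :=
  Real.exp (-(∫ z in x₀..y, 2 * S.b z / (S.σ z) ^ 2))

/-- `(W,λ)` is a classical solution of the variational inequality (free-boundary problem). -/
def IsVISol (S : Setting) (θ lam : ℝ) (W : ℝ → ℝ) : Prop :=
  ContDiffOn ℝ 2 W (Ioi 0) ∧
    ∀ x : ℝ, 0 < x →
      max ((1 / 2) * (S.σ x) ^ 2 * deriv (deriv W) x + S.b x * deriv W x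
            - (S.ε / 2) * (S.σ x) ^ 2 * (deriv W x) ^ 2 + S.π x θ - lam)
        (-(deriv W x) - S.c x) = 0

/-- The unnormalized stationary density. -/
def densRaw (S : Setting) (φ : ℝ → ℝ → ℝ → ℝ) (θ x : ℝ) : ℝ :=
  (2 / (S.σ x) ^ 2) *
    Real.exp (-(∫ y in x..S.betaE φ θ, 2 * S.b y / (S.σ y) ^ 2)
      + 2 * S.ε * ∫ y in x..S.betaE φ θ, S.Vx φ y θ)

/-- The normalizing constant `Z(θ)`. -/
def Znorm (S : Setting) (φ : ℝ → ℝ → ℝ → ℝ) (θ : ℝ) : ℝ :=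
  ∫ x in Ioc (0 : ℝ) (S.betaE φ θ), S.densRaw φ θ x

/-- The stationary probability measure `ν^{θ,ε}` with density `m^{θ,ε}`. -/
def nu (S : Setting) (φ : ℝ → ℝ → ℝ → ℝ) (θ : ℝ) : Measure ℝ :=
  volume.withDensity fun x =>
    ENNReal.ofReal ((Ioc (0 : ℝ) (S.betaE φ θ)).indicator
      (fun y => S.densRaw φ θ y / S.Znorm φ θ) x)

end Setting

/-- comparison principle with respect to the mean-field parameter:
`φ_β(·,θ)` is nondecreasing in `θ`. -/
theorem comparison_in_theta (S : Setting) (φ : ℝ → ℝ → ℝ → ℝ)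
    (hφ : ∀ β θ : ℝ, 0 < β → 0 < θ → IsAuxSol S.ε S.b S.σ S.c S.π β θ 0 (φ β θ)) :
    ∀ β : ℝ, 0 < β → ∀ θ₁ θ₂ : ℝ, 0 < θ₁ → θ₁ ≤ θ₂ →
      ∀ x : ℝ, 0 < x → φ β θ₁ x ≤ φ β θ₂ x := by
  intro β hβ θ₁ θ₂ hθ₁ h12 x hx
  have hθ₂ : 0 < θ₂ := lt_of_lt_of_le hθ₁ h12
  obtain ⟨h1s, h1e, h1b⟩ := hφ β θ₁ hβ hθ₁
  obtain ⟨h2s, h2e, h2b⟩ := hφ β θ₂ hβ hθ₂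
  by_cases hxβ : β ≤ x
  · rw [h1b x hxβ, h2b x hxβ]
  push_neg at hxβ
  -- differentiability of the two solutions on `Ioi 0`
  have hd1 : ∀ y ∈ Ioi (0:ℝ), DifferentiableAt ℝ (φ β θ₁) y := fun y hy =>
    (h1s.contDiffAt (isOpen_Ioi.mem_nhds hy)).differentiableAt one_ne_zero
  have hd2 : ∀ y ∈ Ioi (0:ℝ), DifferentiableAt ℝ (φ β θ₂) y := fun y hy =>
    (h2s.contDiffAt (isOpen_Ioi.mem_nhds hy)).differentiableAt one_ne_zero
  -- monotonicity in `θ` of the x-derivative of π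
  have hpideriv : ∀ t ∈ Ioi (0:ℝ),
      deriv (fun x' => S.π x' θ₂) t ≤ deriv (fun x' => S.π x' θ₁) t := by
    intro t ht
    have hanti : StrictAntiOn (fun θ' => deriv (fun x' => S.π x' θ') t) (Ioi 0) := by
      apply strictAntiOn_of_deriv_neg (convex_Ioi 0)
      · intro θ hθ
        have hne : deriv (fun θ' => deriv (fun x' => S.π x' θ') t) θ ≠ 0 :=
          (S.hπxθneg t θ ht hθ).ne
        exact (differentiableAt_of_deriv_ne_zero hne).continuousAt.continuousWithinAt
      · rw [interior_Ioi]
        exact fun θ hθ => S.hπxθneg t θ ht hθ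
    rcases eq_or_lt_of_le h12 with h | h
    · rw [h]
    · exact (hanti (mem_Ioi.2 hθ₁) (mem_Ioi.2 hθ₂) h).le
  -- antitonicity of `D = π(·,θ₂) - π(·,θ₁)` on `Ioi 0`
  have hπd : ∀ (θ : ℝ), 0 < θ → ∀ t ∈ Ioi (0:ℝ), DifferentiableAt ℝ (fun x' => S.π x' θ) t :=
    fun θ hθ t ht => ((S.hπC2 θ hθ).contDiffAt (isOpen_Ioi.mem_nhds ht)).differentiableAt
      (by norm_num)
  have hD : AntitoneOn (fun t => S.π t θ₂ - S.π t θ₁) (Ioi 0) := by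
    apply antitoneOn_of_deriv_nonpos (convex_Ioi 0)
    · exact ((S.hπC2 θ₂ hθ₂).continuousOn).sub ((S.hπC2 θ₁ hθ₁).continuousOn)
    · rw [interior_Ioi]
      exact fun t ht => ((hπd θ₂ hθ₂ t ht).sub (hπd θ₁ hθ₁ t ht)).differentiableWithinAt
    · rw [interior_Ioi]
      intro t ht
      rw [deriv_fun_sub (hπd θ₂ hθ₂ t ht) (hπd θ₁ hθ₁ t ht)]
      have := hpideriv t ht
      linarith
  -- the coefficient function of the linear comparison ODE
  set A : ℝ → ℝ :=
    fun y => S.ε * (φ β θ₂ y + φ β θ₁ y) - 2 * S.b y / (S.σ y) ^ 2 with hAdef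
  have hAcont : ContinuousOn A (Ioi 0) := by
    apply ContinuousOn.sub
    · exact continuousOn_const.mul (h2s.continuousOn.add h1s.continuousOn)
    · exact (continuousOn_const.mul S.hb.continuousOn).div (S.hσ.continuousOn.pow 2)
        (fun y hy => pow_ne_zero 2 (S.hσpos y hy).ne')
  -- the key differential inequality
  have hkey : ∀ y ∈ Ioo (0:ℝ) β,
      deriv (fun t => φ β θ₂ t - φ β θ₁ t) y ≤ A y * (φ β θ₂ y - φ β θ₁ y) := by
    intro y hy
    have hy0 : (0:ℝ) < y := hy.1
    have hyI : y ∈ Ioi (0:ℝ) := hy0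
    have hσ2 : 0 < (S.σ y) ^ 2 := pow_pos (S.hσpos y hy0) 2
    have e1 := h1e y hy
    have e2 := h2e y hy
    have hEll : ell S.ε S.b S.σ S.c S.π β θ₂ - ell S.ε S.b S.σ S.c S.π β θ₁
        = S.π β θ₂ - S.π β θ₁ := by
      simp only [ell]; ring
    have hDle : S.π β θ₂ - S.π β θ₁ ≤ S.π y θ₂ - S.π y θ₁ :=
      hD (mem_Ioi.2 hy0) (mem_Ioi.2 hβ) hy.2.le
    have hder : deriv (fun t => φ β θ₂ t - φ β θ₁ t) y
        = deriv (φ β θ₂) y - deriv (φ β θ₁) y := deriv_sub (hd2 y hyI) (hd1 y hyI)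
    rw [hder]
    have hX : (1/2) * (S.σ y)^2 * (deriv (φ β θ₂) y - deriv (φ β θ₁) y)
        + S.b y * (φ β θ₂ y - φ β θ₁ y)
        - (S.ε/2) * (S.σ y)^2 * ((φ β θ₂ y)^2 - (φ β θ₁ y)^2) ≤ 0 := by
      have : (1/2) * (S.σ y)^2 * (deriv (φ β θ₂) y - deriv (φ β θ₁) y)
          + S.b y * (φ β θ₂ y - φ β θ₁ y)
          - (S.ε/2) * (S.σ y)^2 * ((φ β θ₂ y)^2 - (φ β θ₁ y)^2)
          = (S.π β θ₂ - S.π β θ₁) - (S.π y θ₂ - S.π y θ₁) := by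
        linear_combination e2 - e1 + hEll
      linarith
    have hfrac : 2 * S.b y / (S.σ y)^2 * (S.σ y)^2 = 2 * S.b y :=
      div_mul_cancel₀ _ hσ2.ne'
    have hmul : ((deriv (φ β θ₂) y - deriv (φ β θ₁) y)
        - A y * (φ β θ₂ y - φ β θ₁ y)) * (S.σ y)^2 ≤ 0 * (S.σ y)^2 := by
      have hid : ((deriv (φ β θ₂) y - deriv (φ β θ₁) y)
          - (S.ε * (φ β θ₂ y + φ β θ₁ y) - 2 * S.b y / (S.σ y) ^ 2)
            * (φ β θ₂ y - φ β θ₁ y)) * (S.σ y)^2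
          = 2 * ((1/2) * (S.σ y)^2 * (deriv (φ β θ₂) y - deriv (φ β θ₁) y)
            + S.b y * (φ β θ₂ y - φ β θ₁ y)
            - (S.ε/2) * (S.σ y)^2 * ((φ β θ₂ y)^2 - (φ β θ₁ y)^2)) := by
        field_simp
        have hinv : S.σ y ^ 2 * (S.σ y)⁻¹ ^ 2 = 1 := by
          rw [← mul_pow, mul_inv_cancel₀ (S.hσpos y hy0).ne', one_pow]
        linear_combination (2 * S.b y * (φ β θ₂ y - φ β θ₁ y)) * hinv
      simp only [hAdef]
      linarith [hid, hX]
    have := (mul_le_mul_iff_of_pos_right hσ2).mp hmul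
    linarith
  -- Grönwall-type argument on `[x, β]`
  have hsub : Icc x β ⊆ Ioi (0:ℝ) := fun t ht => lt_of_lt_of_le hx ht.1
  have hAint : IntegrableOn A (uIcc x β) := by
    rw [uIcc_of_le hxβ.le]
    exact (hAcont.mono hsub).integrableOn_compact isCompact_Icc
  set I : ℝ → ℝ := fun y => ∫ t in x..y, A t with hIdef
  have hIder : ∀ y ∈ Ioo x β, HasDerivAt I (A y) y := by
    intro y hy
    have hy0 : y ∈ Ioi (0:ℝ) := hx.trans hy.1
    apply intervalIntegral.integral_hasDerivAt_right
    · apply ContinuousOn.intervalIntegrable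
      apply hAcont.mono
      rw [uIcc_of_le hy.1.le]
      exact fun t ht => lt_of_lt_of_le hx ht.1
    · exact ContinuousOn.stronglyMeasurableAtFilter isOpen_Ioi hAcont y hy0
    · exact hAcont.continuousAt (isOpen_Ioi.mem_nhds hy0)
  set u : ℝ → ℝ := fun y => (φ β θ₂ y - φ β θ₁ y) * Real.exp (-(I y)) with hudef
  have huder : ∀ y ∈ Ioo x β, HasDerivAt u
      ((deriv (fun t => φ β θ₂ t - φ β θ₁ t) y - A y * (φ β θ₂ y - φ β θ₁ y))
        * Real.exp (-(I y))) y := by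
    intro y hy
    have hy0 : y ∈ Ioi (0:ℝ) := hx.trans hy.1
    have hg : HasDerivAt (fun t => φ β θ₂ t - φ β θ₁ t)
        (deriv (fun t => φ β θ₂ t - φ β θ₁ t) y) y :=
      (((hd2 y hy0).sub (hd1 y hy0))).hasDerivAt
    have hE : HasDerivAt (fun t => Real.exp (-(I t)))
        (Real.exp (-(I y)) * (-(A y))) y := ((hIder y hy).neg).exp
    have := hg.fun_mul hE
    exact this.congr_deriv (by ring)
  have hu_anti : AntitoneOn u (Icc x β) := by
    apply antitoneOn_of_deriv_nonpos (convex_Icc x β)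
    · apply ContinuousOn.mul
      · exact (h2s.continuousOn.sub h1s.continuousOn).mono hsub
      · apply (Real.continuous_exp.comp_continuousOn (ContinuousOn.neg ?_))
        have : ContinuousOn I (uIcc x β) := intervalIntegral.continuousOn_primitive_interval hAint
        rw [uIcc_of_le hxβ.le] at this
        exact this
    · rw [interior_Icc]
      exact fun y hy => (huder y hy).differentiableAt.differentiableWithinAt
    · rw [interior_Icc]
      intro y hy
      rw [(huder y hy).deriv]
      have hkey' := hkey y ⟨hx.trans hy.1, hy.2⟩
      have hexp : 0 < Real.exp (-(I y)) := Real.exp_pos _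
      nlinarith
  have hub : u β = 0 := by
    have e1 : φ β θ₁ β = -(S.c β) := h1b β le_rfl
    have e2 : φ β θ₂ β = -(S.c β) := h2b β le_rfl
    simp [hudef, e1, e2]
  have hux : u x = φ β θ₂ x - φ β θ₁ x := by
    simp [hudef, hIdef, intervalIntegral.integral_same]
  have := hu_anti (left_mem_Icc.2 hxβ.le) (right_mem_Icc.2 hxβ.le) hxβ.le
  rw [hub, hux] at this
  linarith
end
end

section
/- Let α, κ, σ > 0 and consider the mean-reverting diffusion coefficients b(x) := α(κ − x) and σ(x) := σx on (0,∞). Then for any fixed reference point x₀ > 0 and every x > 0 the speed measure of (0,x) is finite: ∫_0^x (2/(σ² y²)) · exp( ∫_{x₀}^y 2α(κ − z)/(σ² z²) dz ) dy < ∞. In particular the non-attainability assumption on the boundary point 0 holds for the diffusion dX_t = α(κ − X_t) dt + σ X_t dW_t. -/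
open Set MeasureTheory

private lemma inner_integral_eval (α κ σ : ℝ) (hσ : 0 < σ) (x₀ : ℝ) (hx₀ : 0 < x₀)
    (y : ℝ) (hy : 0 < y) :
    (∫ z in x₀..y, 2 * α * (κ - z) / (σ ^ 2 * z ^ 2)) =
      (2*α*κ/σ^2) * (x₀⁻¹ - y⁻¹) + (2*α/σ^2) * (Real.log x₀ - Real.log y) := by
  have hmin : 0 < min x₀ y := lt_min hx₀ hy
  have hσ2 : (σ:ℝ)^2 ≠ 0 := by positivity
  have key : ∀ z ∈ uIcc x₀ y,
      HasDerivAt (fun t => -(2*α*κ/σ^2) * t⁻¹ - (2*α/σ^2) * Real.log t)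
        (2 * α * (κ - z) / (σ ^ 2 * z ^ 2)) z := by
    intro z hz
    have hz0 : 0 < z := lt_of_lt_of_le hmin hz.1
    have h1 : HasDerivAt (fun t : ℝ => t⁻¹) (-(z^2)⁻¹) z := by
      simpa using hasDerivAt_inv hz0.ne'
    have h2 : HasDerivAt Real.log z⁻¹ z := Real.hasDerivAt_log hz0.ne'
    have h := (h1.const_mul (-(2*α*κ/σ^2))).sub (h2.const_mul (2*α/σ^2))
    refine h.congr_deriv ?_
    field_simp
  have hint : IntervalIntegrable (fun z => 2 * α * (κ - z) / (σ ^ 2 * z ^ 2))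
      MeasureTheory.volume x₀ y := by
    apply ContinuousOn.intervalIntegrable
    apply ContinuousOn.div
    · fun_prop
    · fun_prop
    · intro z hz
      have hz0 : 0 < z := lt_of_lt_of_le hmin hz.1
      positivity
  rw [intervalIntegral.integral_eq_sub_of_hasDerivAt key hint]
  ring

/-- for the mean-reverting diffusion `dX = α(κ − X)dt + σX dW` on `(0,∞)`,
the speed measure of `(0,x)` is finite for every `x > 0` (non-attainability of `0`). -/
theorem speed_measure_finite_mean_reverting (α κ σ : ℝ) (hα : 0 < α) (hκ : 0 < κ)
    (hσ : 0 < σ) (x₀ : ℝ) (hx₀ : 0 < x₀) (x : ℝ) (hx : 0 < x) :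
    IntegrableOn
      (fun y => (2 / (σ ^ 2 * y ^ 2)) *
        Real.exp (∫ z in x₀..y, 2 * α * (κ - z) / (σ ^ 2 * z ^ 2)))
      (Ioo 0 x) := by
  set A : ℝ := 2*α*κ/σ^2 with hAdef
  set B : ℝ := 2*α/σ^2 with hBdef
  have hA : 0 < A := by positivity
  have hB : 0 < B := by positivity
  have hB2 : 0 < B + 2 := by linarith
  set g : ℝ → ℝ := fun y =>
    (2 / (σ ^ 2 * y ^ 2)) * Real.exp (A * (x₀⁻¹ - y⁻¹) + B * (Real.log x₀ - Real.log y))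
    with hgdef
  -- the bound constant
  set M : ℝ := (2/σ^2) * Real.exp (A * x₀⁻¹ + B * Real.log x₀ +
      (B+2) * (Real.log ((B+2)/A) - 1)) with hMdef
  have hgbound : ∀ y ∈ Ioo (0:ℝ) x, ‖g y‖ ≤ M := by
    intro y hy
    have hy0 : 0 < y := hy.1
    have hy2 : (0:ℝ) < y^2 := by positivity
    -- rewrite g y as a single exponential
    have hrw : g y = (2/σ^2) * Real.exp
        (A * x₀⁻¹ + B * Real.log x₀ + (- (A * y⁻¹) - (B+2) * Real.log y)) := by
      have hinv : (y^2)⁻¹ = Real.exp (-(2 * Real.log y)) := by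
        rw [Real.exp_neg]
        congr 1
        rw [two_mul, Real.exp_add, Real.exp_log hy0]; ring
      have : (2 : ℝ) / (σ ^ 2 * y ^ 2) = (2/σ^2) * (y^2)⁻¹ := by
        field_simp
      rw [hgdef]
      simp only
      rw [this, hinv, mul_assoc, ← Real.exp_add]
      congr 1
      ring
    -- bound the exponent tail : -A/y - (B+2) log y ≤ (B+2)(log((B+2)/A) - 1)
    have hlog : Real.log y⁻¹ ≤ (A/(B+2)) * y⁻¹ - 1 - Real.log (A/(B+2)) := by
      have hε : 0 < A/(B+2) := by positivity
      have hεy : 0 < (A/(B+2)) * y⁻¹ := by positivity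
      have h1 : Real.log ((A/(B+2)) * y⁻¹) ≤ (A/(B+2)) * y⁻¹ - 1 :=
        Real.log_le_sub_one_of_pos hεy
      rw [Real.log_mul hε.ne' (by positivity)] at h1
      linarith
    have htail : - (A * y⁻¹) - (B+2) * Real.log y ≤ (B+2) * (Real.log ((B+2)/A) - 1) := by
      have hly : Real.log y⁻¹ = - Real.log y := Real.log_inv y
      have h2 : (B+2) * Real.log y⁻¹ ≤ A * y⁻¹ - (B+2) - (B+2) * Real.log (A/(B+2)) := by
        have := mul_le_mul_of_nonneg_left hlog (le_of_lt hB2)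
        calc (B+2) * Real.log y⁻¹ ≤ (B+2) * ((A/(B+2)) * y⁻¹ - 1 - Real.log (A/(B+2))) := this
          _ = A * y⁻¹ - (B+2) - (B+2) * Real.log (A/(B+2)) := by field_simp
      have hloginv : Real.log ((B+2)/A) = - Real.log (A/(B+2)) := by
        rw [← Real.log_inv]
        congr 1
        field_simp
      rw [hly] at h2
      rw [hloginv]
      linarith
    have hgpos : 0 ≤ g y := by
      rw [hgdef]
      positivity
    rw [Real.norm_of_nonneg hgpos, hrw, hMdef]
    have h2σ : (0:ℝ) < 2/σ^2 := by positivity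
    apply mul_le_mul_of_nonneg_left _ (le_of_lt h2σ)
    exact Real.exp_le_exp.mpr (by linarith)
  have hgmeas : AEStronglyMeasurable g MeasureTheory.volume := by
    refine Measurable.aestronglyMeasurable (Measurable.mul ?_ (Real.measurable_exp.comp ?_))
    · exact measurable_const.div (measurable_const.mul (measurable_id.pow measurable_const))
    · exact ((measurable_const.sub measurable_inv).const_mul A).add
        ((measurable_const.sub Real.measurable_log).const_mul B)
  have hgint : IntegrableOn g (Ioo 0 x) := by
    apply Measure.integrableOn_of_bounded (M := M) (by simp) hgmeas
    · filter_upwards [ae_restrict_mem measurableSet_Ioo] with y hy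
      exact hgbound y hy
  apply hgint.congr_fun _ measurableSet_Ioo
  intro y hy
  rw [hgdef]
  simp only
  rw [inner_integral_eval α κ σ hσ x₀ hx₀ y hy.1]
end
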